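/- Fix m ≥ 1, distinct u, v ∈ ℝ^m, and let σ : ℝ^m → ℝ^m be the reflection across the perpendicular bisector hyperplane of u and v (the affine isometric involution with σ(u) = v and σ(v) = u). For k ≥ 1 peers, let q_1, …, q_k : ℝ^m → ℝ be measurable probability densities, each radially symmetric at 0, and for ground truth θ ∈ ℝ^m let peer i's report have density x ↦ q_i(x − θ). Define g(θ) = ∫_{(ℝ^m)^k} ( 𝟙[‖u − θ‖ < ‖x_i − θ‖ for all i] − 𝟙[‖v − θ‖ < ‖x_i − θ‖ for all i] ) ∏_{i=1}^k q_i(x_i − θ) dx. Then g(σ(θ)) = −g(θ) for every θ ∈ ℝ^m (Step 2 of the proof of Theorem 1: reflection antisymmetry of the gain in win probability under a radially symmetric location family). -/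

import Mathlib

open MeasureTheory
open scoped RealInnerProductSpace

/-- The reflection of `ℝ^m` across the perpendicular bisector hyperplane of `u`
and `v`: the affine isometric involution exchanging `u` and `v` and fixing the
hyperplane `{z : ‖z − u‖ = ‖z − v‖}` pointwise. -/
noncomputable def bisectorReflection (m : ℕ) (u v z : EuclideanSpace ℝ (Fin m)) :
    EuclideanSpace ℝ (Fin m) :=
  z - ((2 * ⟪z - midpoint ℝ u v, v - u⟫) / ‖v - u‖ ^ 2) • (v - u)

/-- The gain in strict-win probability from reporting `u` instead of `v` when the
ground truth (and reference solution) is `θ` and each peer `i`'s report has the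
location-family density `x ↦ q i (x − θ)`. -/
noncomputable def winGainLoc (m k : ℕ) (q : Fin k → EuclideanSpace ℝ (Fin m) → ℝ)
    (u v θ : EuclideanSpace ℝ (Fin m)) : ℝ :=
  ∫ x : Fin k → EuclideanSpace ℝ (Fin m),
    ((if ∀ i : Fin k, ‖u - θ‖ < ‖x i - θ‖ then (1 : ℝ) else 0) -
      (if ∀ i : Fin k, ‖v - θ‖ < ‖x i - θ‖ then (1 : ℝ) else 0)) *
      ∏ i : Fin k, q i (x i - θ)

lemma bisectorReflection_eq (m : ℕ) (u v z : EuclideanSpace ℝ (Fin m)) :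
    bisectorReflection m u v z =
      (Submodule.reflection ((ℝ ∙ (v - u))ᗮ)) (z - midpoint ℝ u v) + midpoint ℝ u v := by
  rw [Submodule.reflection_apply, Submodule.starProjection_orthogonal_val,
    Submodule.starProjection_singleton, bisectorReflection]
  rw [real_inner_comm]
  simp only [RCLike.ofReal_real_eq_id, id_eq]
  match_scalars <;> ring

lemma bisectorReflection_left (m : ℕ) (u v : EuclideanSpace ℝ (Fin m)) (huv : u ≠ v) :
    bisectorReflection m u v u = v := by
  have hw : v - u ≠ 0 := sub_ne_zero.mpr (Ne.symm huv)
  have hw2 : (‖v - u‖ : ℝ) ^ 2 ≠ 0 := pow_ne_zero _ (norm_ne_zero_iff.mpr hw)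
  rw [bisectorReflection, left_sub_midpoint]
  have h1 : ⟪(⅟2 : ℝ) • (u - v), v - u⟫ = (⅟2 : ℝ) * -(‖v - u‖ ^ 2) := by
    rw [real_inner_smul_left, ← neg_sub v u, inner_neg_left, real_inner_self_eq_norm_sq]
  rw [h1]
  have h2 : (2 * ((⅟2 : ℝ) * -(‖v - u‖ ^ 2))) / ‖v - u‖ ^ 2 = -1 := by
    rw [invOf_eq_inv]; field_simp
  rw [h2]; module

lemma bisectorReflection_right (m : ℕ) (u v : EuclideanSpace ℝ (Fin m)) (huv : u ≠ v) :
    bisectorReflection m u v v = u := by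
  have hw : v - u ≠ 0 := sub_ne_zero.mpr (Ne.symm huv)
  have hw2 : (‖v - u‖ : ℝ) ^ 2 ≠ 0 := pow_ne_zero _ (norm_ne_zero_iff.mpr hw)
  rw [bisectorReflection, right_sub_midpoint]
  have h1 : ⟪(⅟2 : ℝ) • (v - u), v - u⟫ = (⅟2 : ℝ) * (‖v - u‖ ^ 2) := by
    rw [real_inner_smul_left, real_inner_self_eq_norm_sq]
  rw [h1]
  have h2 : (2 * ((⅟2 : ℝ) * (‖v - u‖ ^ 2))) / ‖v - u‖ ^ 2 = 1 := by
    rw [invOf_eq_inv]; field_simp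
  rw [h2]; module

lemma bisectorReflection_involutive (m : ℕ) (u v z : EuclideanSpace ℝ (Fin m)) :
    bisectorReflection m u v (bisectorReflection m u v z) = z := by
  rw [bisectorReflection_eq, bisectorReflection_eq, add_sub_cancel_right,
    Submodule.reflection_reflection, sub_add_cancel]

lemma bisectorReflection_isometry (m : ℕ) (u v a b : EuclideanSpace ℝ (Fin m)) :
    ‖bisectorReflection m u v a - bisectorReflection m u v b‖ = ‖a - b‖ := by
  rw [bisectorReflection_eq, bisectorReflection_eq, add_sub_add_right_eq_sub,
    ← LinearIsometryEquiv.map_sub, LinearIsometryEquiv.norm_map, sub_sub_sub_cancel_right]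

lemma bisectorReflection_measurePreserving (m : ℕ) (u v : EuclideanSpace ℝ (Fin m)) :
    MeasurePreserving (bisectorReflection m u v) volume volume := by
  have h : bisectorReflection m u v =
      (fun z => z + midpoint ℝ u v) ∘ ⇑(Submodule.reflection ((ℝ ∙ (v - u))ᗮ)) ∘
        (fun z => z - midpoint ℝ u v) := funext fun z => bisectorReflection_eq m u v z
  rw [h]
  exact (measurePreserving_add_right volume _).comp
    ((Submodule.reflection ((ℝ ∙ (v - u))ᗮ)).measurePreserving.comp
      (measurePreserving_sub_right volume _))

lemma bisectorReflection_continuous (m : ℕ) (u v : EuclideanSpace ℝ (Fin m)) :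
    Continuous (bisectorReflection m u v) := by
  have h : bisectorReflection m u v =
      (fun z => z + midpoint ℝ u v) ∘ ⇑(Submodule.reflection ((ℝ ∙ (v - u))ᗮ)) ∘
        (fun z => z - midpoint ℝ u v) := funext fun z => bisectorReflection_eq m u v z
  rw [h]
  exact (continuous_add_right _).comp
    ((Submodule.reflection ((ℝ ∙ (v - u))ᗮ)).continuous.comp (continuous_sub_right _))

/-- **Step 2 of the proof of Theorem 1.** Under a radially symmetric location
family of peer densities, the gain in win probability from reporting `u` instead
of `v` is antisymmetric under reflection of the ground truth across the
perpendicular bisector hyperplane of `u` and `v`. -/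
theorem winGain_reflection_antisymmetric
    (m k : ℕ) (hm : 1 ≤ m) (hk : 1 ≤ k)
    (u v : EuclideanSpace ℝ (Fin m)) (huv : u ≠ v)
    (q : Fin k → EuclideanSpace ℝ (Fin m) → ℝ)
    (hq_meas : ∀ i, Measurable (q i))
    (hq_nonneg : ∀ i x, 0 ≤ q i x)
    (hq_int : ∀ i, (∫ x : EuclideanSpace ℝ (Fin m), q i x) = 1)
    (hq_radial : ∀ i, ∀ x y : EuclideanSpace ℝ (Fin m), ‖x‖ = ‖y‖ → q i x = q i y) :
    ∀ θ : EuclideanSpace ℝ (Fin m),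
      winGainLoc m k q u v (bisectorReflection m u v θ) = - winGainLoc m k q u v θ := by

  intro θ
  set σ : EuclideanSpace ℝ (Fin m) → EuclideanSpace ℝ (Fin m) := bisectorReflection m u v with hσ
  set θ' : EuclideanSpace ℝ (Fin m) := σ θ with hθ'
  have hinv : ∀ z, σ (σ z) = z := fun z => bisectorReflection_involutive m u v z
  have hA : ∀ z : EuclideanSpace ℝ (Fin m), ‖z - θ'‖ = ‖σ z - θ‖ := by
    intro z
    conv_rhs => rw [← hinv θ]
    exact (bisectorReflection_isometry m u v z θ').symm
  have hσu : σ u = v := bisectorReflection_left m u v huv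
  have hσv : σ v = u := bisectorReflection_right m u v huv
  have h1 : ‖u - θ'‖ = ‖v - θ‖ := by rw [hA u, hσu]
  have h2 : ‖v - θ'‖ = ‖u - θ‖ := by rw [hA v, hσv]
  -- the measure preserving pi map
  have hmp : MeasurePreserving (fun x : Fin k → EuclideanSpace ℝ (Fin m) => fun i => σ (x i)) volume volume :=
    volume_preserving_pi fun _ => bisectorReflection_measurePreserving m u v
  have hcont : Continuous σ := bisectorReflection_continuous m u v
  let σe : EuclideanSpace ℝ (Fin m) ≃ᵐ EuclideanSpace ℝ (Fin m) :=
    Homeomorph.toMeasurableEquiv ⟨⟨σ, σ, hinv, hinv⟩, hcont, hcont⟩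
  have hemb : MeasurableEmbedding (fun x : Fin k → EuclideanSpace ℝ (Fin m) => fun i => σ (x i)) := by
    have h := (MeasurableEquiv.piCongrRight fun _ : Fin k => σe).measurableEmbedding
    have hcoe : ⇑(MeasurableEquiv.piCongrRight fun _ : Fin k => σe) =
        fun x : Fin k → EuclideanSpace ℝ (Fin m) => fun i => σ (x i) := rfl
    rwa [hcoe] at h
  set G : (Fin k → EuclideanSpace ℝ (Fin m)) → ℝ := fun y =>
    ((if ∀ i : Fin k, ‖u - θ‖ < ‖y i - θ‖ then (1 : ℝ) else 0) -
      (if ∀ i : Fin k, ‖v - θ‖ < ‖y i - θ‖ then (1 : ℝ) else 0)) *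
      ∏ i : Fin k, q i (y i - θ) with hG
  have hcomp : ∫ x : Fin k → EuclideanSpace ℝ (Fin m), G (fun i => σ (x i)) = ∫ y, G y :=
    hmp.integral_comp hemb G
  have hkey : ∀ x : Fin k → EuclideanSpace ℝ (Fin m),
      ((if ∀ i : Fin k, ‖u - θ'‖ < ‖x i - θ'‖ then (1 : ℝ) else 0) -
        (if ∀ i : Fin k, ‖v - θ'‖ < ‖x i - θ'‖ then (1 : ℝ) else 0)) *
        ∏ i : Fin k, q i (x i - θ') = -(G fun i => σ (x i)) := by
    intro x
    have hq : ∀ i : Fin k, q i (x i - θ') = q i (σ (x i) - θ) := fun i =>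
      hq_radial i _ _ (hA (x i))
    simp only [hG, h1, h2]
    simp only [hA]
    simp only [hq]
    ring
  calc winGainLoc m k q u v θ'
      = ∫ x : Fin k → EuclideanSpace ℝ (Fin m), -(G fun i => σ (x i)) := by
        rw [winGainLoc]
        exact integral_congr_ae (Filter.Eventually.of_forall hkey)
    _ = -∫ x : Fin k → EuclideanSpace ℝ (Fin m), G (fun i => σ (x i)) := integral_neg _
    _ = -∫ y, G y := by rw [hcomp]
    _ = - winGainLoc m k q u v θ := rfl
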